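/- arXiv:1207.5910 — 4 statements merged into one kernel-verified Lean document; each statement's English description precedes it below -/
import Mathlib

section
/- If g ∈ GL_m(ℝ) satisfies g · S⁺_𝒢 ⊆ S⁺_𝒢 (where g · K = g⁻ᵀ K g⁻¹), then in fact g · S⁺_𝒢 = S⁺_𝒢 and also g⁻¹ · S⁺_𝒢 = S⁺_𝒢. -/
open Matrix

/-- Congruence by an invertible matrix preserves positive definiteness. -/
lemma aux_congr_posDef {m : ℕ} {K B C : Matrix (Fin m) (Fin m) ℝ} (hK : K.PosDef)
    (hCB : C * B = 1) : (Bᵀ * K * B).PosDef := by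
  have hBH : Bᴴ = Bᵀ := by ext i j; simp [conjTranspose_apply]
  refine posDef_iff_dotProduct_mulVec.mpr ⟨by rw [← hBH]; exact isHermitian_conjTranspose_mul_mul B hK.1, ?_⟩
  intro x hx
  have hBx : B *ᵥ x ≠ 0 := by
    intro h
    apply hx
    have := congrArg (fun v => C *ᵥ v) h
    simpa [mulVec_mulVec, hCB] using this
  have key : star x ⬝ᵥ (Bᵀ * K * B) *ᵥ x = star (B *ᵥ x) ⬝ᵥ K *ᵥ (B *ᵥ x) := by
    rw [← mulVec_mulVec, ← mulVec_mulVec, dotProduct_mulVec]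
    simp [vecMul_transpose]
  rw [key]
  exact hK.dotProduct_mulVec_pos hBx

/-- Any symmetric real matrix becomes positive definite after adding a large
positive multiple of the identity. -/
lemma aux_shift_posDef {m : ℕ} {A : Matrix (Fin m) (Fin m) ℝ} (hA : A.IsSymm) :
    ∃ c : ℝ, 0 < c ∧ (A + c • 1).PosDef := by
  set S : ℝ := ∑ i, ∑ j, |A i j| with hS
  have hS0 : 0 ≤ S :=
    Finset.sum_nonneg fun i _ => Finset.sum_nonneg fun j _ => abs_nonneg _
  have hsymm : (A + (S + 1) • (1 : Matrix (Fin m) (Fin m) ℝ)).IsSymm :=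
    hA.add (by simp [Matrix.IsSymm])
  refine ⟨S + 1, by linarith, posDef_iff_dotProduct_mulVec.mpr ⟨hsymm, ?_⟩⟩
  intro x hx
  have hxx0 : 0 < x ⬝ᵥ x := by
    rcases lt_or_eq_of_le (Finset.sum_nonneg fun i _ => mul_self_nonneg (x i) :
        (0:ℝ) ≤ x ⬝ᵥ x) with h | h
    · exact h
    · exact absurd (dotProduct_self_eq_zero.mp h.symm) hx
  have hsq : ∀ i, x i ^ 2 ≤ x ⬝ᵥ x := by
    intro i
    have := Finset.single_le_sum (f := fun k => x k * x k)
      (fun k _ => mul_self_nonneg (x k)) (Finset.mem_univ i)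
    simpa [dotProduct, sq] using this
  have hterm : ∀ i j, -(|A i j| * (x ⬝ᵥ x)) ≤ x i * (A i j * x j) := by
    intro i j
    have h1 : |x i * (A i j * x j)| ≤ |A i j| * (x ⬝ᵥ x) := by
      have hxij : |x i| * |x j| ≤ x ⬝ᵥ x := by
        have hi := hsq i
        have hj := hsq j
        nlinarith [sq_abs (x i), sq_abs (x j), sq_nonneg (|x i| - |x j|)]
      calc |x i * (A i j * x j)| = |A i j| * (|x i| * |x j|) := by
            rw [abs_mul, abs_mul]; ring
        _ ≤ |A i j| * (x ⬝ᵥ x) := by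
            exact mul_le_mul_of_nonneg_left hxij (abs_nonneg _)
    linarith [neg_abs_le (x i * (A i j * x j))]
  have hexp : star x ⬝ᵥ (A + (S + 1) • (1 : Matrix (Fin m) (Fin m) ℝ)) *ᵥ x
      = (∑ i, ∑ j, x i * (A i j * x j)) + (S + 1) * (x ⬝ᵥ x) := by
    have h1 : (A + (S + 1) • (1 : Matrix (Fin m) (Fin m) ℝ)) *ᵥ x
        = A *ᵥ x + (S + 1) • x := by
      rw [add_mulVec, smul_mulVec, one_mulVec]
    rw [show star x = x from funext fun i => star_trivial _, h1, dotProduct_add]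
    congr 1
    · simp only [dotProduct, mulVec, dotProduct]
      exact Finset.sum_congr rfl fun i _ => by rw [Finset.mul_sum]
    · simp [dotProduct_smul, smul_eq_mul]
  rw [hexp]
  have hsum : -(S * (x ⬝ᵥ x)) ≤ ∑ i, ∑ j, x i * (A i j * x j) := by
    have : ∑ i, ∑ j, -(|A i j| * (x ⬝ᵥ x)) ≤ ∑ i, ∑ j, x i * (A i j * x j) :=
      Finset.sum_le_sum fun i _ => Finset.sum_le_sum fun j _ => hterm i j
    calc -(S * (x ⬝ᵥ x)) = ∑ i, ∑ j, -(|A i j| * (x ⬝ᵥ x)) := by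
          simp [hS, Finset.sum_neg_distrib, Finset.sum_mul]
      _ ≤ _ := this
  nlinarith

/-- If `g ∈ GL_m(ℝ)` maps `S⁺_𝒢` into itself under `K ↦ g⁻ᵀ K g⁻¹`, then it maps
`S⁺_𝒢` onto itself, and so does `g⁻¹`. -/
theorem stmt_1 (m : ℕ) (𝒢 : SimpleGraph (Fin m)) (g : GL (Fin m) ℝ)
    (act : GL (Fin m) ℝ → Matrix (Fin m) (Fin m) ℝ → Matrix (Fin m) (Fin m) ℝ)
    (hact : ∀ h K, act h K =
      (↑(h⁻¹) : Matrix (Fin m) (Fin m) ℝ)ᵀ * K * (↑(h⁻¹) : Matrix (Fin m) (Fin m) ℝ))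
    (Splus : Set (Matrix (Fin m) (Fin m) ℝ))
    (hSplus : Splus =
      {K | K.IsSymm ∧ (∀ i j, i ≠ j → ¬ 𝒢.Adj i j → K i j = 0) ∧ K.PosDef})
    (hg : ∀ K ∈ Splus, act g K ∈ Splus) :
    (act g) '' Splus = Splus ∧ (act g⁻¹) '' Splus = Splus := by
  subst hSplus
  -- cancellation
  have key : ∀ (h : GL (Fin m) ℝ) (K : Matrix (Fin m) (Fin m) ℝ),
      act h (act h⁻¹ K) = K := by
    intro h K
    rw [hact, hact, inv_inv]
    have h1 : (↑h : Matrix (Fin m) (Fin m) ℝ) * (↑(h⁻¹) : Matrix (Fin m) (Fin m) ℝ) = 1 :=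
      Units.mul_inv h
    have h2 : ((↑(h⁻¹) : Matrix (Fin m) (Fin m) ℝ))ᵀ * ((↑h : Matrix (Fin m) (Fin m) ℝ))ᵀ
        = 1 := by rw [← transpose_mul, h1, transpose_one]
    calc (↑(h⁻¹) : Matrix (Fin m) (Fin m) ℝ)ᵀ *
          ((↑h : Matrix (Fin m) (Fin m) ℝ)ᵀ * K * (↑h : Matrix (Fin m) (Fin m) ℝ)) *
          (↑(h⁻¹) : Matrix (Fin m) (Fin m) ℝ)
        = ((↑(h⁻¹) : Matrix (Fin m) (Fin m) ℝ)ᵀ * (↑h : Matrix (Fin m) (Fin m) ℝ)ᵀ) * K *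
          ((↑h : Matrix (Fin m) (Fin m) ℝ) * (↑(h⁻¹) : Matrix (Fin m) (Fin m) ℝ)) := by
          noncomm_ring
      _ = K := by rw [h1, h2, Matrix.one_mul, Matrix.mul_one]
  have key2 : ∀ (h : GL (Fin m) ℝ) (K : Matrix (Fin m) (Fin m) ℝ),
      act h⁻¹ (act h K) = K := by
    intro h K
    simpa [inv_inv] using key h⁻¹ K
  -- the pattern subspace
  let Ssub : Submodule ℝ (Matrix (Fin m) (Fin m) ℝ) :=
  { carrier := {A | A.IsSymm ∧ ∀ i j, i ≠ j → ¬ 𝒢.Adj i j → A i j = 0}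
    add_mem' := by
      rintro a b ⟨ha1, ha2⟩ ⟨hb1, hb2⟩
      exact ⟨ha1.add hb1, fun i j hij hadj => by
        simp [Matrix.add_apply, ha2 i j hij hadj, hb2 i j hij hadj]⟩
    zero_mem' := ⟨by simp [Matrix.IsSymm], fun i j _ _ => rfl⟩
    smul_mem' := by
      rintro c a ⟨ha1, ha2⟩
      exact ⟨by simp [Matrix.IsSymm, transpose_smul, ha1.eq], fun i j hij hadj => by
        simp [Matrix.smul_apply, ha2 i j hij hadj]⟩ }
  -- act h as a linear map
  let L : GL (Fin m) ℝ → (Matrix (Fin m) (Fin m) ℝ →ₗ[ℝ] Matrix (Fin m) (Fin m) ℝ) :=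
    fun h =>
    { toFun := act h
      map_add' := by intro a b; simp [hact, Matrix.mul_add, Matrix.add_mul]
      map_smul' := by intro c a; simp [hact, Matrix.mul_smul, Matrix.smul_mul] }
  -- a positive multiple of the identity lies in Splus
  have hcI : ∀ c : ℝ, 0 < c →
      (c • (1 : Matrix (Fin m) (Fin m) ℝ)) ∈
        {K : Matrix (Fin m) (Fin m) ℝ |
          K.IsSymm ∧ (∀ i j, i ≠ j → ¬ 𝒢.Adj i j → K i j = 0) ∧ K.PosDef} := by
    intro c hc
    refine ⟨by simp [Matrix.IsSymm], fun i j hij _ => by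
      simp [Matrix.smul_apply, Matrix.one_apply_ne hij], ?_⟩
    rw [Matrix.smul_one_eq_diagonal]
    exact posDef_diagonal_iff.mpr fun _ => hc
  -- L g maps the subspace into itself
  have hLS : ∀ A ∈ Ssub, L g A ∈ Ssub := by
    rintro A ⟨hs, hp⟩
    obtain ⟨c, hc, hpd⟩ := aux_shift_posDef hs
    have hP : (A + c • 1) ∈
        {K : Matrix (Fin m) (Fin m) ℝ |
          K.IsSymm ∧ (∀ i j, i ≠ j → ¬ 𝒢.Adj i j → K i j = 0) ∧ K.PosDef} := by
      refine ⟨hs.add (by simp [Matrix.IsSymm]), fun i j hij hadj => by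
        simp [Matrix.add_apply, hp i j hij hadj, Matrix.smul_apply,
          Matrix.one_apply_ne hij], hpd⟩
    have hQ := hcI c hc
    have hdiff : A = (A + c • 1) - c • (1 : Matrix (Fin m) (Fin m) ℝ) := by abel
    have h1 : L g (A + c • 1) ∈ Ssub := by
      have := hg _ hP
      exact ⟨this.1, this.2.1⟩
    have h2 : L g (c • (1 : Matrix (Fin m) (Fin m) ℝ)) ∈ Ssub := by
      have := hg _ hQ
      exact ⟨this.1, this.2.1⟩
    rw [hdiff, map_sub]
    exact Ssub.sub_mem h1 h2
  -- L g is injective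
  have hLinj : Function.Injective (L g) := by
    intro a b hab
    have := congrArg (act g⁻¹) hab
    simpa [L, key2 g a, key2 g b] using this
  -- restricted map is surjective by finite dimensionality
  have hfs : Function.Surjective ((L g).restrict hLS) := by
    rw [← LinearMap.injective_iff_surjective]
    intro a b hab
    exact Subtype.ext (hLinj (congrArg Subtype.val hab))
  -- act g⁻¹ preserves Splus
  have hginv : ∀ K ∈
      {K : Matrix (Fin m) (Fin m) ℝ |
        K.IsSymm ∧ (∀ i j, i ≠ j → ¬ 𝒢.Adj i j → K i j = 0) ∧ K.PosDef},
      act g⁻¹ K ∈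
      {K : Matrix (Fin m) (Fin m) ℝ |
        K.IsSymm ∧ (∀ i j, i ≠ j → ¬ 𝒢.Adj i j → K i j = 0) ∧ K.PosDef} := by
    rintro K ⟨hs, hp, hpd⟩
    have hKmem : K ∈ Ssub := ⟨hs, hp⟩
    obtain ⟨⟨A, hA⟩, hfA⟩ := hfs ⟨K, hKmem⟩
    have hAK : act g A = K := congrArg Subtype.val hfA
    have hA' : act g⁻¹ K = A := by rw [← hAK, key2]
    have hpd' : (act g⁻¹ K).PosDef := by
      rw [hact, inv_inv]
      exact aux_congr_posDef hpd (Units.inv_mul g)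
    rw [hA'] at hpd' ⊢
    exact ⟨hA.1, hA.2, hpd'⟩
  constructor
  · apply Set.Subset.antisymm
    · rintro K ⟨P, hP, rfl⟩
      exact hg P hP
    · intro K hK
      exact ⟨act g⁻¹ K, hginv K hK, key g K⟩
  · apply Set.Subset.antisymm
    · rintro K ⟨P, hP, rfl⟩
      exact hginv P hP
    · intro K hK
      exact ⟨act g K, hg K hK, key2 g K⟩
end

section
/- Let i ≠ j be vertices of 𝒢. The one-parameter family of matrices g_t = I + t E_{ij} (t ∈ ℝ) satisfies g_t⁻ᵀ K g_t⁻¹ ∈ S_𝒢 for all K ∈ S_𝒢 and all t if and only if N(i) ∪ {i} ⊆ N(j) ∪ {j} (i.e., j ≼ i). -/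
open Matrix

lemma inv_one_add (m : ℕ) (i j : Fin m) (hij : i ≠ j) (t : ℝ) :
    ((1 : Matrix (Fin m) (Fin m) ℝ) + t • Matrix.single i j (1 : ℝ))⁻¹
      = 1 - t • Matrix.single i j (1 : ℝ) := by
  apply Matrix.inv_eq_right_inv
  have h0 : (t • Matrix.single i j (1:ℝ)) * (t • Matrix.single i j (1:ℝ)) = 0 := by
    rw [Matrix.smul_mul, Matrix.mul_smul,
      Matrix.single_mul_single_of_ne (c := (1:ℝ)) (i := i) (j := j) (k := i) (h := Ne.symm hij) (d := 1)]
    simp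
  rw [mul_sub, mul_one, add_mul, one_mul, h0]
  abel

lemma transpose_std (m : ℕ) (i j : Fin m) (c : ℝ) :
    (Matrix.single i j c)ᵀ = Matrix.single j i c := by
  ext a b
  simp [Matrix.single, and_comm]

lemma mulL (m : ℕ) (i j : Fin m) (t : ℝ) (K : Matrix (Fin m) (Fin m) ℝ) (a b : Fin m) :
    (((1 : Matrix (Fin m) (Fin m) ℝ) - t • Matrix.single j i (1:ℝ)) * K) a b
      = K a b - (if a = j then t * K i b else 0) := by
  rw [Matrix.sub_mul, Matrix.one_mul, Matrix.sub_apply, Matrix.smul_mul, Matrix.smul_apply]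
  by_cases h : a = j
  · subst h; rw [Matrix.single_mul_apply_same]; simp
  · rw [Matrix.single_mul_apply_of_ne (h := h)]; simp [h]

lemma mulR (m : ℕ) (i j : Fin m) (t : ℝ) (M : Matrix (Fin m) (Fin m) ℝ) (a b : Fin m) :
    (M * ((1 : Matrix (Fin m) (Fin m) ℝ) - t • Matrix.single i j (1:ℝ))) a b
      = M a b - (if b = j then t * M a i else 0) := by
  rw [Matrix.mul_sub, Matrix.mul_one, Matrix.sub_apply, Matrix.mul_smul, Matrix.smul_apply]
  by_cases h : b = j
  · subst h; rw [Matrix.mul_single_apply_same]; simp [mul_comm]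
  · rw [Matrix.mul_single_apply_of_ne (hbj := h)]; simp [h]

lemma conj_apply (m : ℕ) (i j : Fin m) (hij : i ≠ j) (t : ℝ)
    (K : Matrix (Fin m) (Fin m) ℝ) (a b : Fin m) :
    ((((1 : Matrix (Fin m) (Fin m) ℝ) + t • Matrix.single i j (1 : ℝ))⁻¹)ᵀ *
        K * ((1 : Matrix (Fin m) (Fin m) ℝ) + t • Matrix.single i j (1 : ℝ))⁻¹) a b
      = K a b - (if a = j then t * K i b else 0)
          - (if b = j then t * (K a i - (if a = j then t * K i i else 0)) else 0) := by
  rw [inv_one_add m i j hij t, Matrix.transpose_sub, Matrix.transpose_one, Matrix.transpose_smul,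
    transpose_std, mulR, mulL, mulL]


/-- For `i ≠ j`, the one-parameter family `g_t = I + t E_{ij}` satisfies
`g_t⁻ᵀ K g_t⁻¹ ∈ S_𝒢` for all `K ∈ S_𝒢` and all `t` if and only if
`N(i) ∪ {i} ⊆ N(j) ∪ {j}`, i.e. `j ≼ i`. -/
theorem stmt_8 (m : ℕ) (𝒢 : SimpleGraph (Fin m)) (i j : Fin m) (hij : i ≠ j) :
    (∀ K : Matrix (Fin m) (Fin m) ℝ,
        K.IsSymm → (∀ a b, a ≠ b → ¬ 𝒢.Adj a b → K a b = 0) →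
      ∀ t : ℝ,
        (((1 : Matrix (Fin m) (Fin m) ℝ) + t • Matrix.single i j (1 : ℝ))⁻¹)ᵀ *
            K * ((1 : Matrix (Fin m) (Fin m) ℝ) + t • Matrix.single i j (1 : ℝ))⁻¹
          ∈ {L : Matrix (Fin m) (Fin m) ℝ |
              L.IsSymm ∧ ∀ a b, a ≠ b → ¬ 𝒢.Adj a b → L a b = 0}) ↔
    𝒢.neighborSet i ∪ {i} ⊆ 𝒢.neighborSet j ∪ {j} := by
  constructor
  · intro h k hk
    by_cases hkj : k = j
    · right; exact hkj
    refine Or.inl ?_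
    show 𝒢.Adj j k
    rcases hk with hk | hk
    · have hadj : 𝒢.Adj i k := hk
      have hki : k ≠ i := fun h' => (𝒢.loopless.irrefl i (h' ▸ hadj)).elim
      set K : Matrix (Fin m) (Fin m) ℝ :=
        Matrix.single i k 1 + Matrix.single k i 1 with hK
      have hs : K.IsSymm := by
        rw [hK, Matrix.IsSymm, Matrix.transpose_add, transpose_std, transpose_std, add_comm]
      have hz : ∀ a b, a ≠ b → ¬ 𝒢.Adj a b → K a b = 0 := by
        intro a b hab hnadj
        rw [hK, Matrix.add_apply,
          Matrix.single_apply_of_ne (i := i) (j := k) (c := (1:ℝ)) (i' := a) (j' := b) (by rintro ⟨rfl, rfl⟩; exact hnadj hadj),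
          Matrix.single_apply_of_ne (i := k) (j := i) (c := (1:ℝ)) (i' := a) (j' := b)
            (by rintro ⟨rfl, rfl⟩; exact hnadj hadj.symm), add_zero]
      by_contra hnadj
      have hmem := (h K hs hz 1).2 j k (Ne.symm hkj) hnadj
      rw [conj_apply m i j hij 1 K j k] at hmem
      have hKjk : K j k = 0 := by
        rw [hK, Matrix.add_apply,
          Matrix.single_apply_of_ne (i := i) (j := k) (c := (1:ℝ)) (i' := j) (j' := k) (fun h' => hij h'.1),
          Matrix.single_apply_of_ne (i := k) (j := i) (c := (1:ℝ)) (i' := j) (j' := k) (fun h' => hkj h'.1),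
          add_zero]
      have hKik : K i k = 1 := by
        rw [hK, Matrix.add_apply, Matrix.single_apply_same,
          Matrix.single_apply_of_ne (i := k) (j := i) (c := (1:ℝ)) (i' := i) (j' := k) (fun h' => hki h'.1),
          add_zero]
      rw [hKjk, hKik, if_pos rfl, if_neg hkj] at hmem
      norm_num at hmem
    · rcases hk with rfl
      set K : Matrix (Fin m) (Fin m) ℝ := Matrix.single k k 1 with hK
      have hs : K.IsSymm := by
        rw [hK, Matrix.IsSymm, transpose_std]
      have hz : ∀ a b, a ≠ b → ¬ 𝒢.Adj a b → K a b = 0 := by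
        intro a b hab _
        rw [hK, Matrix.single_apply_of_ne (i := k) (j := k) (c := (1:ℝ)) (i' := a) (j' := b) (fun h' => hab (h'.1.symm.trans h'.2))]
      by_contra hnadj
      have hmem := (h K hs hz 1).2 j k (Ne.symm hkj) hnadj
      rw [conj_apply m k j hij 1 K j k] at hmem
      have hKjk : K j k = 0 := by
        rw [hK, Matrix.single_apply_of_ne (i := k) (j := k) (c := (1:ℝ)) (i' := j) (j' := k) (fun h' => hkj h'.1)]
      have hKkk : K k k = 1 := by rw [hK, Matrix.single_apply_same]
      rw [hKjk, hKkk, if_pos rfl, if_neg hkj] at hmem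
      norm_num at hmem
  · intro hsub K hsymm hzero t
    have hadjji : 𝒢.Adj j i := by
      have h' : i ∈ 𝒢.neighborSet j ∪ {j} := hsub (Or.inr rfl)
      rcases h' with h' | h'
      · exact h'
      · exact absurd h' hij
    have hstep : ∀ k, 𝒢.Adj i k → k ≠ j → 𝒢.Adj j k := by
      intro k hk hkj
      have h' : k ∈ 𝒢.neighborSet j ∪ {j} := hsub (Or.inl hk)
      rcases h' with h' | h'
      · exact h'
      · exact absurd h' hkj
    have hKi : ∀ b, b ≠ j → ¬ 𝒢.Adj j b → K i b = 0 := by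
      intro b hbj hnadj
      by_cases hbi : b = i
      · exact absurd (hbi ▸ hadjji) hnadj
      · exact hzero i b (Ne.symm hbi) fun hadj => hnadj (hstep b hadj hbj)
    constructor
    · apply Matrix.IsSymm.ext
      intro a b
      rw [conj_apply m i j hij t K a b, conj_apply m i j hij t K b a,
        hsymm.apply a b, hsymm.apply i b, hsymm.apply a i]
      by_cases ha : a = j <;> by_cases hb : b = j <;> simp [ha, hb] <;> ring
    · intro a b hab hnadj
      rw [conj_apply m i j hij t K a b, hzero a b hab hnadj]
      by_cases ha : a = j
      · have hbj : b ≠ j := fun h' => hab (ha.trans h'.symm)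
        have hKib : K i b = 0 := hKi b hbj (by rw [← ha]; exact hnadj)
        rw [hKib, if_pos ha, if_neg hbj]
        ring
      · by_cases hb : b = j
        · have hKai : K a i = 0 := by
            rw [hsymm.apply i a]
            exact hKi a ha (fun h' => hnadj (hb ▸ h'.symm))
          rw [hKai, if_neg ha, if_pos hb, if_neg ha]
          ring
        · rw [if_neg ha, if_neg hb]
          ring
end

section
/- Every element g ∈ G⁰ maps S⁺_𝒢 into itself under the action K ↦ g⁻ᵀ K g⁻¹; that is, G⁰ is contained in the stabilizer group G of the model. -/
open Matrix

/-- If `g` is invertible and supported on a transitive reflexive relation `r`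
(`g i j = 0` when `¬ r i j`), then so is `g⁻¹`. -/
lemma inv_pattern {m : ℕ} (r : Fin m → Fin m → Prop)
    (htrans : ∀ {i j k}, r i j → r j k → r i k) (hrefl : ∀ i, r i i)
    (g : GL (Fin m) ℝ) (hg : ∀ i j, ¬ r i j → (↑g : Matrix (Fin m) (Fin m) ℝ) i j = 0) :
    ∀ i j, ¬ r i j → (↑(g⁻¹) : Matrix (Fin m) (Fin m) ℝ) i j = 0 := by
  classical
  set S : Submodule ℝ (Matrix (Fin m) (Fin m) ℝ) :=
    { carrier := {M | ∀ i j, ¬ r i j → M i j = 0}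
      add_mem' := by intro a b ha hb i j h; simp [ha i j h, hb i j h]
      zero_mem' := by intro i j h; simp
      smul_mem' := by intro c a ha i j h; simp [ha i j h] } with hS
  have hmul : ∀ a ∈ S, ∀ b ∈ S, a * b ∈ S := by
    intro a ha b hb i j h
    rw [Matrix.mul_apply]
    apply Finset.sum_eq_zero
    intro k _
    by_cases hik : r i k
    · by_cases hkj : r k j
      · exact absurd (htrans hik hkj) h
      · rw [hb k j hkj, mul_zero]
    · rw [ha i k hik, zero_mul]
  have hgS : (↑g : Matrix (Fin m) (Fin m) ℝ) ∈ S := fun i j h => hg i j h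
  have honeS : (1 : Matrix (Fin m) (Fin m) ℝ) ∈ S := by
    intro i j h
    have : i ≠ j := fun hij => h (hij ▸ hrefl i)
    simp [Matrix.one_apply, this]
  let L : S →ₗ[ℝ] S :=
    { toFun := fun x => ⟨(↑g : Matrix (Fin m) (Fin m) ℝ) * x, hmul _ hgS _ x.2⟩
      map_add' := by intro x y; ext : 2; simp [mul_add]
      map_smul' := by intro c x; ext : 2; simp [Matrix.mul_smul] }
  have hig : (↑(g⁻¹) : Matrix (Fin m) (Fin m) ℝ) * (↑g : Matrix (Fin m) (Fin m) ℝ) = 1 :=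
    Units.inv_mul g
  have hinj : Function.Injective L := by
    intro x y hxy
    have h1 : (↑g : Matrix (Fin m) (Fin m) ℝ) * (x : Matrix (Fin m) (Fin m) ℝ)
        = (↑g : Matrix (Fin m) (Fin m) ℝ) * (y : Matrix (Fin m) (Fin m) ℝ) :=
      congrArg Subtype.val hxy
    have h2 : (x : Matrix (Fin m) (Fin m) ℝ) = (y : Matrix (Fin m) (Fin m) ℝ) := by
      calc (x : Matrix (Fin m) (Fin m) ℝ)
          = (↑(g⁻¹) : Matrix (Fin m) (Fin m) ℝ) * ((↑g : Matrix (Fin m) (Fin m) ℝ) * ↑x) := by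
            rw [← mul_assoc, hig, one_mul]
        _ = (↑(g⁻¹) : Matrix (Fin m) (Fin m) ℝ) * ((↑g : Matrix (Fin m) (Fin m) ℝ) * ↑y) := by
            rw [h1]
        _ = (y : Matrix (Fin m) (Fin m) ℝ) := by rw [← mul_assoc, hig, one_mul]
    exact Subtype.ext h2
  have hsurj : Function.Surjective L := by
    have : FiniteDimensional ℝ S := inferInstance
    exact (LinearMap.injective_iff_surjective).mp hinj
  obtain ⟨h, hh⟩ := hsurj ⟨1, honeS⟩
  have hgh : (↑g : Matrix (Fin m) (Fin m) ℝ) * (h : Matrix (Fin m) (Fin m) ℝ) = 1 :=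
    congrArg Subtype.val hh
  have hinv : (↑(g⁻¹) : Matrix (Fin m) (Fin m) ℝ) = (h : Matrix (Fin m) (Fin m) ℝ) := by
    calc (↑(g⁻¹) : Matrix (Fin m) (Fin m) ℝ)
        = (↑(g⁻¹) : Matrix (Fin m) (Fin m) ℝ) * ((↑g : Matrix (Fin m) (Fin m) ℝ) * ↑h) := by
            rw [hgh, mul_one]
      _ = (↑(g⁻¹) * (↑g : Matrix (Fin m) (Fin m) ℝ)) * ↑h := by rw [mul_assoc]
      _ = ↑h := by rw [hig, one_mul]
  rw [hinv]
  exact h.2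

/-- Every `g ∈ G⁰` (invertible with `g i j = 0` whenever `¬ j ≼ i`, for the pre-order
`i ≼ j ↔ N(j) ∪ {j} ⊆ N(i) ∪ {i}`) maps `S⁺_𝒢` into itself under `K ↦ g⁻ᵀ K g⁻¹`. -/
theorem stmt_9 (m : ℕ) (𝒢 : SimpleGraph (Fin m)) (g : GL (Fin m) ℝ)
    (hg : ∀ i j : Fin m, ¬ (𝒢.neighborSet i ∪ {i} ⊆ 𝒢.neighborSet j ∪ {j}) →
      (↑g : Matrix (Fin m) (Fin m) ℝ) i j = 0)
    (K : Matrix (Fin m) (Fin m) ℝ) (hsymm : K.IsSymm)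
    (hzero : ∀ i j, i ≠ j → ¬ 𝒢.Adj i j → K i j = 0) (hpos : K.PosDef) :
    let K' := (↑(g⁻¹) : Matrix (Fin m) (Fin m) ℝ)ᵀ * K * (↑(g⁻¹) : Matrix (Fin m) (Fin m) ℝ)
    K'.IsSymm ∧ (∀ i j, i ≠ j → ¬ 𝒢.Adj i j → K' i j = 0) ∧ K'.PosDef := by
  intro K'
  classical
  set B := (↑(g⁻¹) : Matrix (Fin m) (Fin m) ℝ) with hB
  -- closure and its symmetry
  set cl : Fin m → Set (Fin m) := fun i => 𝒢.neighborSet i ∪ {i} with hcl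
  have hclmem : ∀ i, i ∈ cl i := fun i => Or.inr rfl
  have hclsymm : ∀ {a b : Fin m}, a ∈ cl b → b ∈ cl a := by
    intro a b hab
    rcases hab with h | h
    · exact Or.inl (𝒢.adj_symm h)
    · exact h ▸ hclmem a
  -- pattern of g⁻¹
  have hBinv : ∀ i j, ¬ cl i ⊆ cl j → B i j = 0 := by
    refine inv_pattern (fun i j => cl i ⊆ cl j) (fun h1 h2 => h1.trans h2)
      (fun i => subset_rfl) g hg
  -- key combinatorial fact
  have key : ∀ {i j k l : Fin m}, cl k ⊆ cl i → cl l ⊆ cl j → l ∈ cl k →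
      i ≠ j → 𝒢.Adj i j := by
    intro i j k l hki hlj hlk hij
    have hli : l ∈ cl i := hki hlk
    have hil : i ∈ cl l := hclsymm hli
    have hij' : i ∈ cl j := hlj hil
    rcases hclsymm hij' with h | h
    · exact h
    · exact absurd h.symm hij
  have hK'symm : K'ᵀ = K' := by
    have : Kᵀ = K := hsymm
    simp only [K', Matrix.transpose_mul, Matrix.transpose_transpose, this, Matrix.mul_assoc]
  refine ⟨hK'symm, ?_, ?_⟩
  · -- zero pattern
    intro i j hij hadj
    show (Bᵀ * K * B) i j = 0
    rw [Matrix.mul_apply]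
    apply Finset.sum_eq_zero
    intro l _
    rw [Matrix.mul_apply]
    rw [Finset.sum_mul]
    apply Finset.sum_eq_zero
    intro k _
    show Bᵀ i k * K k l * B l j = 0
    by_cases hki : cl k ⊆ cl i
    · by_cases hlj : cl l ⊆ cl j
      · -- need K k l = 0
        have hKkl : K k l = 0 := by
          by_cases hkl : k = l
          · exact absurd (key hki hlj (hkl ▸ hclmem k) hij) hadj
          · refine hzero k l hkl fun hadjkl => ?_
            -- hadjkl : Adj k l, so l ∈ N(k) ⊆ cl k
            exact hadj (key hki hlj (Or.inl hadjkl) hij)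
        rw [hKkl, mul_zero, zero_mul]
      · rw [hBinv l j hlj, mul_zero]
    · have : Bᵀ i k = 0 := hBinv k i hki
      rw [this, zero_mul, zero_mul]
  · -- positive definiteness
    have hBinj : ∀ x : Fin m → ℝ, B *ᵥ x = 0 → x = 0 := by
      intro x hx
      have h1 : (↑g : Matrix (Fin m) (Fin m) ℝ) * B = 1 := Units.mul_inv g
      calc x = ((↑g : Matrix (Fin m) (Fin m) ℝ) * B) *ᵥ x := by rw [h1, Matrix.one_mulVec]
        _ = (↑g : Matrix (Fin m) (Fin m) ℝ) *ᵥ (B *ᵥ x) := by rw [Matrix.mulVec_mulVec]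
        _ = 0 := by rw [hx, Matrix.mulVec_zero]
    refine Matrix.PosDef.of_dotProduct_mulVec_pos ?_ ?_
    · show K'ᴴ = K'
      rw [Matrix.conjTranspose_eq_transpose_of_trivial]
      exact hK'symm
    · intro x hx
      have hBx : B *ᵥ x ≠ 0 := fun h => hx (hBinj x h)
      have := hpos.dotProduct_mulVec_pos hBx
      have hrw : dotProduct (star x) (K' *ᵥ x)
          = dotProduct (star (B *ᵥ x)) (K *ᵥ (B *ᵥ x)) := by
        simp only [K', star_trivial]
        rw [← Matrix.mulVec_mulVec, ← Matrix.mulVec_mulVec,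
          Matrix.dotProduct_mulVec, Matrix.vecMul_transpose]
      rw [hrw]
      exact this
end

section
/- Let x ∈ ℝ^{m×n}. The set of matrices g ∈ G⁰ fixing x (i.e., g x = x) is the intersection of GL_m(ℝ) with an affine subspace of m×m matrices; moreover if n ≥ max_i |↓i| and for each i the rows of x indexed by ↓i are linearly independent, then the identity is the only element of G⁰ with g x = x. -/
open Matrix

/-- The set of `g ∈ G⁰` fixing a sample `x` is the intersection of `GL_m(ℝ)` with an
affine subspace of matrix space; and if `n ≥ max_i |↓i|` and for each `i` the rows of
`x` indexed by the down-set `↓i` are linearly independent, then the identity is the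
only element of `G⁰` fixing `x`. -/
theorem stmt_17 (m n : ℕ) (𝒢 : SimpleGraph (Fin m)) (x : Matrix (Fin m) (Fin n) ℝ) :
    (∃ V : AffineSubspace ℝ (Matrix (Fin m) (Fin m) ℝ),
      {g : Matrix (Fin m) (Fin m) ℝ |
          (IsUnit g ∧ ∀ i j : Fin m,
              ¬ (𝒢.neighborSet i ∪ {i} ⊆ 𝒢.neighborSet j ∪ {j}) → g i j = 0) ∧
          g * x = x}
        = {g : Matrix (Fin m) (Fin m) ℝ | IsUnit g} ∩ (V : Set (Matrix (Fin m) (Fin m) ℝ))) ∧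
    ((∀ i : Fin m,
        ({j : Fin m | 𝒢.neighborSet i ∪ {i} ⊆ 𝒢.neighborSet j ∪ {j}}).ncard ≤ n) →
     (∀ i : Fin m, LinearIndependent ℝ
        (fun j : {j : Fin m // 𝒢.neighborSet i ∪ {i} ⊆ 𝒢.neighborSet j ∪ {j}} =>
          x j.1)) →
     ∀ g : Matrix (Fin m) (Fin m) ℝ, IsUnit g →
       (∀ i j : Fin m,
          ¬ (𝒢.neighborSet i ∪ {i} ⊆ 𝒢.neighborSet j ∪ {j}) → g i j = 0) →
       g * x = x → g = 1) := by
  classical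
  constructor
  · refine ⟨⟨{g : Matrix (Fin m) (Fin m) ℝ |
        (∀ i j : Fin m,
          ¬ (𝒢.neighborSet i ∪ {i} ⊆ 𝒢.neighborSet j ∪ {j}) → g i j = 0) ∧ g * x = x},
      ?_⟩, ?_⟩
    · rintro c p1 p2 p3 ⟨h1, e1⟩ ⟨h2, e2⟩ ⟨h3, e3⟩
      constructor
      · intro i j hij
        simp [Matrix.add_apply, Matrix.sub_apply, Matrix.smul_apply,
          h1 i j hij, h2 i j hij, h3 i j hij]
      · show (c • (p1 - p2) + p3) * x = x
        rw [Matrix.add_mul, Matrix.smul_mul, Matrix.sub_mul, e1, e2, e3]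
        simp
    · ext g
      simp only [Set.mem_setOf_eq, Set.mem_inter_iff]
      constructor
      · rintro ⟨⟨hu, hp⟩, he⟩; exact ⟨hu, hp, he⟩
      · rintro ⟨hu, hp, he⟩; exact ⟨⟨hu, hp⟩, he⟩
  · intro _hn hli g _hu hpat hgx
    ext i j
    set P : Fin m → Prop := fun j => 𝒢.neighborSet i ∪ {i} ⊆ 𝒢.neighborSet j ∪ {j} with hP
    have hPi : P i := le_refl _
    have hsum : ∑ j : {j // P j}, (g i j.1 - if (i : Fin m) = j.1 then 1 else 0) •
        x j.1 = 0 := by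
      have h1 : ∑ j : {j // P j}, g i j.1 • x j.1 = ∑ k : Fin m, g i k • x k := by
        rw [← Finset.sum_subtype (Finset.univ.filter P)
          (fun k => by simp) (fun k => g i k • x k)]
        rw [Finset.sum_filter_of_ne]
        intro k _ hk
        by_contra hk'
        exact hk (by simp [hpat i k hk'])
      have h2 : ∑ k : Fin m, g i k • x k = x i := by
        funext l
        have := congrFun (congrFun hgx i) l
        simpa [Matrix.mul_apply, Finset.sum_apply] using this
      have h3 : ∑ j : {j // P j}, (if (i : Fin m) = j.1 then (1:ℝ) else 0) • x j.1
          = x i := by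
        rw [Finset.sum_eq_single (⟨i, hPi⟩ : {j // P j})]
        · simp
        · intro b _ hb
          have : i ≠ b.1 := fun h => hb (Subtype.ext h.symm)
          simp [this]
        · intro h; exact absurd (Finset.mem_univ _) h
      simp only [sub_smul]
      rw [Finset.sum_sub_distrib, h1, h2, h3, sub_self]
    have := Fintype.linearIndependent_iff.mp (hli i)
      (fun j => g i j.1 - if (i : Fin m) = j.1 then 1 else 0) hsum
    by_cases hj : P j
    · have := this ⟨j, hj⟩
      simp only [sub_eq_zero] at this
      simp [Matrix.one_apply, this]
    · rw [hpat i j hj, Matrix.one_apply]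
      have : i ≠ j := fun h => hj (h ▸ hPi)
      simp [this]
end
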